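/- arXiv:1002.2011 — 2 statements merged into one kernel-verified Lean document; each statement's English description precedes it below -/
import Mathlib

section
/- Let d > 0, γ > 0, c > 0, and s ∈ ℝ with 0 < s < d. For bounded measurable m : [0,∞) → ℂ with |m| ≤ 1, define L(r) = ∫₀^∞ m(t) t^{s/(d+1)} e^{-c(r^{d+1}/t)^γ} e^{-t} dt/t for r > 0. Then there is a constant C, depending only on d, γ, c, s, such that |L(r)| ≤ C (r^{s-d} + r^{γ(s-d)/(γ+1)}) exp(-C⁻¹ r^{γ(d+1)/(γ+1)}) for all r > 0. -/
/-!
Weighted AM-GM with weights `1/(γ+1)` and `γ/(γ+1)` bounds `c (r^{d+1}/t)^γ + t/2` from below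
by `κ r^β`, `β = γ(d+1)/(γ+1)`, uniformly in `t`. Hence the integrand is at most
`e^{-κ r^β} t^{s/(d+1)-1} e^{-t/2}`, which gives `|L(r)| ≤ G e^{-κ r^β}` with `G` a Gamma-type
integral. Finally `e^{-κu} ≲ u^{-q} e^{-κu/2}` with `q = (d-s)/(d+1) ∈ [0,1]`, and
`(r^β)^{-q} = r^{γ(s-d)/(γ+1)}`.
-/

open MeasureTheory Set Real

theorem rpow_mul_le_mul_rpow_add_half {c γ X t : ℝ} (hc : 0 ≤ c) (hγ : 0 ≤ γ) (hX : 0 ≤ X)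
    (ht : 0 ≤ t) :
    c ^ (1 / (γ + 1)) / 2 ^ (γ / (γ + 1)) * (X * t) ^ (γ / (γ + 1)) ≤ c * X ^ γ + t / 2 := by
  have hγ1 : 0 < γ + 1 := by linarith
  have hA : 0 ≤ c * X ^ γ := by positivity
  have hB : 0 ≤ t / 2 := by positivity
  have hw₁ : 0 ≤ 1 / (γ + 1) := by positivity
  have hw₂ : 0 ≤ γ / (γ + 1) := by positivity
  have hw : 1 / (γ + 1) + γ / (γ + 1) = 1 := by field_simp; ring
  have hprod : (c * X ^ γ) ^ (1 / (γ + 1)) * (t / 2) ^ (γ / (γ + 1)) =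
      c ^ (1 / (γ + 1)) / 2 ^ (γ / (γ + 1)) * (X * t) ^ (γ / (γ + 1)) := by
    rw [mul_rpow hc (rpow_nonneg hX γ), ← rpow_mul hX, div_rpow ht zero_le_two,
      mul_rpow hX ht, show γ * (1 / (γ + 1)) = γ / (γ + 1) by ring]
    ring
  calc c ^ (1 / (γ + 1)) / 2 ^ (γ / (γ + 1)) * (X * t) ^ (γ / (γ + 1))
      ≤ 1 / (γ + 1) * (c * X ^ γ) + γ / (γ + 1) * (t / 2) :=
        hprod ▸ geom_mean_le_arith_mean2_weighted hw₁ hw₂ hA hB hw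
    _ ≤ c * X ^ γ + t / 2 :=
        add_le_add (mul_le_of_le_one_left hA (by linarith))
          (mul_le_of_le_one_left hB (by linarith))

theorem norm_integral_kernel_le {a c γ p r : ℝ} (ha : 0 < a) (hc : 0 ≤ c) (hγ : 0 ≤ γ)
    (hr : 0 < r) {m : ℝ → ℂ} (hmb : ∀ t, ‖m t‖ ≤ 1) :
    ‖∫ t in Ioi (0 : ℝ), m t * ((t ^ a * exp (-c * (r ^ p / t) ^ γ) * exp (-t) / t : ℝ) : ℂ)‖ ≤
      exp (-(c ^ (1 / (γ + 1)) / 2 ^ (γ / (γ + 1)) * r ^ (γ * p / (γ + 1)))) *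
        ∫ t in Ioi (0 : ℝ), t ^ (a - 1) * exp (-2⁻¹ * t) := by
  set κ := c ^ (1 / (γ + 1)) / 2 ^ (γ / (γ + 1))
  have hint : IntegrableOn (fun t : ℝ => t ^ (a - 1) * exp (-2⁻¹ * t)) (Ioi 0) := by
    simpa using integrableOn_rpow_mul_exp_neg_mul_rpow (p := 1) (s := a - 1) (b := 2⁻¹)
      (by linarith) one_pos (by norm_num)
  rw [← integral_const_mul]
  refine norm_integral_le_of_norm_le (hint.const_mul _) ?_
  filter_upwards [ae_restrict_mem measurableSet_Ioi] with t (ht : 0 < t)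
  have hexp : κ * r ^ (γ * p / (γ + 1)) ≤ c * (r ^ p / t) ^ γ + t / 2 := by
    have := rpow_mul_le_mul_rpow_add_half hc hγ (div_pos (rpow_pos_of_pos hr p) ht).le ht.le
    rwa [div_mul_cancel₀ _ ht.ne', ← rpow_mul hr.le,
      show p * (γ / (γ + 1)) = γ * p / (γ + 1) by ring] at this
  rw [norm_mul, Complex.norm_real, norm_of_nonneg (by positivity)]
  calc ‖m t‖ * (t ^ a * exp (-c * (r ^ p / t) ^ γ) * exp (-t) / t)
      ≤ 1 * (t ^ (a - 1) * exp (-(c * (r ^ p / t) ^ γ + t))) := by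
        gcongr
        · exact hmb t
        · rw [rpow_sub_one ht.ne', neg_add, exp_add, neg_mul]
          exact le_of_eq (by ring)
    _ ≤ exp (-(κ * r ^ (γ * p / (γ + 1)))) * (t ^ (a - 1) * exp (-2⁻¹ * t)) := by
        rw [one_mul, mul_left_comm, ← exp_add]
        gcongr
        linarith

theorem exp_neg_mul_le_rpow_neg_mul_exp {κ q u : ℝ} (hκ : 0 < κ) (hq₀ : 0 ≤ q) (hq₁ : q ≤ 1)
    (hu : 0 < u) : exp (-(κ * u)) ≤ max 1 (2 / κ) * u ^ (-q) * exp (-(κ / 2 * u)) := by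
  have hpow : u ^ q ≤ 1 + u := by
    rcases le_total u 1 with h | h
    · linarith [rpow_le_one hu.le h hq₀]
    · linarith [rpow_le_self_of_one_le h hq₁]
  have hlin : 1 + u ≤ max 1 (2 / κ) * (κ / 2 * u + 1) := by
    have hκK : 1 ≤ max 1 (2 / κ) * (κ / 2) :=
      calc 1 = 2 / κ * (κ / 2) := by field_simp
        _ ≤ max 1 (2 / κ) * (κ / 2) := by gcongr; exact le_max_right _ _
    nlinarith [mul_le_mul_of_nonneg_right hκK hu.le, le_max_left 1 (2 / κ)]
  have hgrowth : u ^ q ≤ max 1 (2 / κ) * exp (κ / 2 * u) :=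
    hpow.trans (hlin.trans (by gcongr; exact add_one_le_exp _))
  rw [rpow_neg hu.le, mul_right_comm, ← div_eq_mul_inv, le_div_iff₀ (by positivity)]
  calc exp (-(κ * u)) * u ^ q ≤ exp (-(κ * u)) * (max 1 (2 / κ) * exp (κ / 2 * u)) := by gcongr
    _ = max 1 (2 / κ) * exp (-(κ / 2 * u)) := by
        rw [mul_left_comm, ← exp_add]; congr 2; ring

theorem kernel_estimate_s_lt_d_general (d γ c s : ℝ) (hd : 0 < d) (hγ : 0 < γ) (hc : 0 < c)
    (hs : 0 < s) (hsd : s < d) (m : ℝ → ℂ) (hmb : ∀ t, ‖m t‖ ≤ 1) :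
    ∃ C : ℝ, 0 < C ∧ ∀ r : ℝ, 0 < r →
      ‖∫ t in Set.Ioi (0 : ℝ),
          m t * ((t ^ (s / (d + 1)) * Real.exp (-c * (r ^ (d + 1) / t) ^ γ) *
            Real.exp (-t) / t : ℝ) : ℂ)‖ ≤
        C * (r ^ (s - d) + r ^ (γ * (s - d) / (γ + 1))) *
          Real.exp (-C⁻¹ * r ^ (γ * (d + 1) / (γ + 1))) := by
  have hd1 : 0 < d + 1 := by linarith
  set κ := c ^ (1 / (γ + 1)) / 2 ^ (γ / (γ + 1))
  have hκ : 0 < κ := by positivity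
  set G := ∫ t in Ioi (0 : ℝ), t ^ (s / (d + 1) - 1) * exp (-2⁻¹ * t)
  have hG : 0 ≤ G := setIntegral_nonneg measurableSet_Ioi fun t (ht : 0 < t) => by positivity
  set K := max 1 (2 / κ)
  set C := G * K + 2 / κ
  have hC : 0 < C := by positivity
  have hCκ : C⁻¹ ≤ κ / 2 := by
    rw [inv_le_comm₀ hC (by positivity), inv_div]
    exact le_add_of_nonneg_left (by positivity)
  refine ⟨C, hC, fun r hr => ?_⟩
  set u := r ^ (γ * (d + 1) / (γ + 1))
  have hu : 0 < u := by positivity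
  set q := (d - s) / (d + 1)
  have hq : u ^ (-q) = r ^ (γ * (s - d) / (γ + 1)) := by
    rw [← rpow_mul hr.le]; congr 1; simp only [q]; field_simp; ring
  calc _ ≤ exp (-(κ * u)) * G := norm_integral_kernel_le (div_pos hs hd1) hc.le hγ.le hr hmb
    _ ≤ K * u ^ (-q) * exp (-(κ / 2 * u)) * G := by
        gcongr
        refine exp_neg_mul_le_rpow_neg_mul_exp hκ (div_nonneg (by linarith) hd1.le) ?_ hu
        rw [div_le_one hd1]; linarith
    _ = G * K * u ^ (-q) * exp (-(κ / 2 * u)) := by ring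
    _ ≤ C * (r ^ (s - d) + u ^ (-q)) * exp (-C⁻¹ * u) := by
        gcongr
        · exact le_add_of_nonneg_right (by positivity)
        · exact le_add_of_nonneg_left (by positivity)
        · rw [neg_mul]; gcongr
    _ = _ := by rw [hq]

theorem kernel_estimate_s_lt_d (d γ c s : ℝ) (hd : 0 < d) (hγ : 0 < γ) (hc : 0 < c)
    (hs : 0 < s) (hsd : s < d) (m : ℝ → ℂ) (hm : Measurable m) (hmb : ∀ t, ‖m t‖ ≤ 1) :
    ∃ C : ℝ, 0 < C ∧ ∀ r : ℝ, 0 < r →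
      ‖∫ t in Set.Ioi (0 : ℝ),
          m t * ((t ^ (s / (d + 1)) * Real.exp (-c * (r ^ (d + 1) / t) ^ γ) *
            Real.exp (-t) / t : ℝ) : ℂ)‖ ≤
        C * (r ^ (s - d) + r ^ (γ * (s - d) / (γ + 1))) *
          Real.exp (-C⁻¹ * r ^ (γ * (d + 1) / (γ + 1))) :=
  kernel_estimate_s_lt_d_general d γ c s hd hγ hc hs hsd m hmb
end

section
/- Let d > 0, γ > 0, c > 0. For s = d and bounded measurable m with |m| ≤ 1, the function L(r) = ∫₀^∞ m(t) t^{d/(d+1)} e^{-c(r^{d+1}/t)^γ} e^{-t} dt/t satisfies |L(r)| ≤ C (1 + |log r|) exp(-C⁻¹ r^{γ(d+1)/(γ+1)}) for all r ∈ (0,1], and in particular |L(r)| ≤ C(1 - log r) for small r. -/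
open MeasureTheory Set

/-!
On `(0, 1]` the decay factor `exp (-C⁻¹ r ^ α)` is bounded below by `exp (-C⁻¹)`, so it suffices to
bound the integral uniformly in `r`. Since `|m| ≤ 1` and the heat-kernel factor
`exp (-c (r ^ (d + 1) / t) ^ γ)` is at most `1`, the integrand is dominated by `e ^ (-t) t ^ (p - 1)`
with `p = d / (d + 1) > 0`, whose integral is `Γ(p)`. The constant `C = Γ(p) + 1` then works, using
`C - 1 ≤ C e ^ (-1 / C)`.
-/

lemma norm_laplace_integrand_le {p c γ a t : ℝ} (hc : 0 ≤ c) (ha : 0 ≤ a) (ht : 0 < t)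
    {z : ℂ} (hz : ‖z‖ ≤ 1) :
    ‖z * ((t ^ p * Real.exp (-c * (a / t) ^ γ) * Real.exp (-t) / t : ℝ) : ℂ)‖ ≤
      Real.exp (-t) * t ^ (p - 1) := by
  have hkernel : Real.exp (-c * (a / t) ^ γ) ≤ 1 := by
    rw [Real.exp_le_one_iff, neg_mul]
    exact neg_nonpos.2 (mul_nonneg hc (Real.rpow_nonneg (div_nonneg ha ht.le) γ))
  rw [norm_mul, Complex.norm_real, Real.norm_of_nonneg (by positivity)]
  calc ‖z‖ * (t ^ p * Real.exp (-c * (a / t) ^ γ) * Real.exp (-t) / t)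
      ≤ 1 * (t ^ p * 1 * Real.exp (-t) / t) := by gcongr
    _ = Real.exp (-t) * t ^ (p - 1) := by
      rw [Real.rpow_sub_one ht.ne']
      ring

lemma norm_laplace_integral_le_Gamma {p c γ a : ℝ} (hp : 0 < p) (hc : 0 ≤ c) (ha : 0 ≤ a)
    {m : ℝ → ℂ} (hmb : ∀ t, ‖m t‖ ≤ 1) :
    ‖∫ t in Ioi (0 : ℝ),
        m t * ((t ^ p * Real.exp (-c * (a / t) ^ γ) * Real.exp (-t) / t : ℝ) : ℂ)‖ ≤
      Real.Gamma p := by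
  rw [Real.Gamma_eq_integral hp]
  refine norm_integral_le_of_norm_le (Real.GammaIntegral_convergent hp) ?_
  filter_upwards [ae_restrict_mem measurableSet_Ioi] with t ht
  exact norm_laplace_integrand_le hc ha ht (hmb t)

lemma sub_one_le_mul_exp_neg_inv_mul {C x : ℝ} (hC : 0 < C) (hx : x ≤ 1) :
    C - 1 ≤ C * Real.exp (-C⁻¹ * x) := by
  calc C - 1 = C * (-C⁻¹ + 1) := by field_simp; ring
    _ ≤ C * Real.exp (-C⁻¹) := by gcongr; exact Real.add_one_le_exp _
    _ ≤ C * Real.exp (-C⁻¹ * x) := by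
      gcongr
      nlinarith [inv_pos.2 hC]

theorem kernel_estimate_s_eq_d_general (d γ c : ℝ) (hd : 0 < d) (hγ : 0 < γ) (hc : 0 < c)
    (m : ℝ → ℂ) (hmb : ∀ t, ‖m t‖ ≤ 1) :
    ∃ C : ℝ, 0 < C ∧
      (∀ r : ℝ, r ∈ Set.Ioc (0 : ℝ) 1 →
        ‖∫ t in Set.Ioi (0 : ℝ),
            m t * ((t ^ (d / (d + 1)) * Real.exp (-c * (r ^ (d + 1) / t) ^ γ) *
              Real.exp (-t) / t : ℝ) : ℂ)‖ ≤
          C * (1 + |Real.log r|) * Real.exp (-C⁻¹ * r ^ (γ * (d + 1) / (γ + 1)))) ∧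
      ∃ r₀ : ℝ, 0 < r₀ ∧ ∀ r : ℝ, r ∈ Set.Ioc (0 : ℝ) r₀ →
        ‖∫ t in Set.Ioi (0 : ℝ),
            m t * ((t ^ (d / (d + 1)) * Real.exp (-c * (r ^ (d + 1) / t) ^ γ) *
              Real.exp (-t) / t : ℝ) : ℂ)‖ ≤ C * (1 - Real.log r) := by
  set Γp := Real.Gamma (d / (d + 1))
  have hp : 0 < d / (d + 1) := by positivity
  have hΓ : 0 < Γp := Real.Gamma_pos_of_pos hp
  have hbound : ∀ r : ℝ, 0 < r → ‖∫ t in Ioi (0 : ℝ),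
      m t * ((t ^ (d / (d + 1)) * Real.exp (-c * (r ^ (d + 1) / t) ^ γ) *
        Real.exp (-t) / t : ℝ) : ℂ)‖ ≤ Γp := fun r hr =>
    norm_laplace_integral_le_Gamma hp hc.le (Real.rpow_nonneg hr.le _) hmb
  refine ⟨Γp + 1, by positivity, fun r ⟨hr0, hr1⟩ => ?_, 1, one_pos, fun r ⟨hr0, hr1⟩ => ?_⟩
  · calc _ ≤ Γp := hbound r hr0
      _ = (Γp + 1) - 1 := by ring
      _ ≤ (Γp + 1) * 1 * Real.exp (-(Γp + 1)⁻¹ * r ^ (γ * (d + 1) / (γ + 1))) := by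
        rw [mul_one]
        exact sub_one_le_mul_exp_neg_inv_mul (by positivity)
          (Real.rpow_le_one hr0.le hr1 (by positivity))
      _ ≤ _ := by gcongr; linarith [abs_nonneg (Real.log r)]
  · nlinarith [hbound r hr0, Real.log_nonpos hr0.le hr1]

theorem kernel_estimate_s_eq_d (d γ c : ℝ) (hd : 0 < d) (hγ : 0 < γ) (hc : 0 < c)
    (m : ℝ → ℂ) (hm : Measurable m) (hmb : ∀ t, ‖m t‖ ≤ 1) :
    ∃ C : ℝ, 0 < C ∧
      (∀ r : ℝ, r ∈ Set.Ioc (0 : ℝ) 1 →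
        ‖∫ t in Set.Ioi (0 : ℝ),
            m t * ((t ^ (d / (d + 1)) * Real.exp (-c * (r ^ (d + 1) / t) ^ γ) *
              Real.exp (-t) / t : ℝ) : ℂ)‖ ≤
          C * (1 + |Real.log r|) * Real.exp (-C⁻¹ * r ^ (γ * (d + 1) / (γ + 1)))) ∧
      ∃ r₀ : ℝ, 0 < r₀ ∧ ∀ r : ℝ, r ∈ Set.Ioc (0 : ℝ) r₀ →
        ‖∫ t in Set.Ioi (0 : ℝ),
            m t * ((t ^ (d / (d + 1)) * Real.exp (-c * (r ^ (d + 1) / t) ^ γ) *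
              Real.exp (-t) / t : ℝ) : ℂ)‖ ≤ C * (1 - Real.log r) :=
  kernel_estimate_s_eq_d_general d γ c hd hγ hc m hmb
end
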